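/- arXiv:2009.05729 — 2 statements merged into one kernel-verified Lean document; each statement's English description precedes it below -/
import Mathlib

section
/- Let f ∈ BV(ℝ) and x ∈ ℝ. Assume M̃f is differentiable at x, |f| is continuous at x, and there is a bounded interval I_x = (x, a_x) with a_x > x such that (1/(a_x − x))∫_x^{a_x} |f| = M̃f(x) and M̃f(x) > |f|(x). Then (M̃f)'(x) = (1/(a_x − x))·(M̃f(x) − |f|(x)). -/
open MeasureTheory Filter Set Topology

/-- Average of |f| over the interval (a,b). -/
noncomputable def mAvg (f : ℝ → ℝ) (a b : ℝ) : ℝ := (∫ t in a..b, |f t|) / (b - a)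

/-- Uncentered Hardy–Littlewood maximal function. -/
noncomputable def uMax (f : ℝ → ℝ) (x : ℝ) : ℝ :=
  sSup {y | ∃ a b : ℝ, a < b ∧ a ≤ x ∧ x ≤ b ∧ y = mAvg f a b}

/-- f has bounded variation on ℝ. -/
def BVfun (f : ℝ → ℝ) : Prop := BoundedVariationOn f Set.univ

/-- Total variation of f over a set, as a real number. -/
noncomputable def varOn (f : ℝ → ℝ) (s : Set ℝ) : ℝ := (eVariationOn f s).toReal

/-- BV norm: |f(-∞)| + Var(f). -/
noncomputable def bvNorm (f : ℝ → ℝ) : ℝ :=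
  |limUnder Filter.atBot f| + varOn f Set.univ

/-- Upper precise representative: limsup over intervals I ∋ x with |I| → 0 of averages of |f|. -/
noncomputable def ubar (f : ℝ → ℝ) (x : ℝ) : ℝ :=
  ⨅ h : {h : ℝ // 0 < h},
    sSup {y | ∃ a b : ℝ, a < b ∧ a ≤ x ∧ x ≤ b ∧ b - a ≤ h.1 ∧ y = mAvg f a b}

/-- The open "interval" (a,b) in ℝ with extended-real endpoints. -/
noncomputable def erealIoo (a b : EReal) : Set ℝ := {x : ℝ | a < (x : EReal) ∧ (x : EReal) < b}

/-- Value of g at an extended-real point, understood as a limit at ±∞. -/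
noncomputable def valAt (g : ℝ → ℝ) (a : EReal) : ℝ :=
  if a = ⊥ then limUnder Filter.atBot g
  else if a = ⊤ then limUnder Filter.atTop g
  else g a.toReal

/-! The averages `y ↦ mAvg f y a` over the intervals `(y, a)`, `y < a`, are competitors in
the supremum defining `uMax f y` (finite, since a BV function is bounded), and at `y = x` this
competitor attains it. So `uMax f` touches the differentiable function `y ↦ mAvg f y a` from
above at `x`, and the two derivatives agree there. By the fundamental theorem of calculus, the
derivative of `y ↦ mAvg f y a` at a point of continuity `x` of `|f|` is
`(mAvg f x a - |f x|) / (a - x)`. -/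

section BoundedVariation

variable {f : ℝ → ℝ}

theorem BoundedVariationOn.abs_le (hf : BoundedVariationOn f univ) (s t : ℝ) :
    |f t| ≤ |f s| + (eVariationOn f univ).toReal := by
  have hdist := hf.dist_le (mem_univ t) (mem_univ s)
  rw [Real.dist_eq] at hdist
  linarith [abs_sub_abs_le_abs_sub (f t) (f s)]

theorem LocallyBoundedVariationOn.measurable (hf : LocallyBoundedVariationOn f univ) :
    Measurable f := by
  obtain ⟨p, q, hp, hq, rfl⟩ := hf.exists_monotoneOn_sub_monotoneOn
  exact (monotoneOn_univ.mp hp).measurable.sub (monotoneOn_univ.mp hq).measurable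

theorem LocallyBoundedVariationOn.intervalIntegrable (hf : LocallyBoundedVariationOn f univ)
    (a b : ℝ) : IntervalIntegrable f volume a b := by
  obtain ⟨p, q, hp, hq, rfl⟩ := hf.exists_monotoneOn_sub_monotoneOn
  exact (monotoneOn_univ.mp hp).intervalIntegrable.sub (monotoneOn_univ.mp hq).intervalIntegrable

end BoundedVariation

section Averages

variable {f : ℝ → ℝ} {a b z C : ℝ}

theorem mAvg_le_of_abs_le (hC : ∀ t, |f t| ≤ C) (hab : a < b) : mAvg f a b ≤ C := by
  have hint : ‖∫ t in a..b, |f t|‖ ≤ C * |b - a| :=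
    intervalIntegral.norm_integral_le_of_norm_le_const fun t _ => by simpa using hC t
  rw [Real.norm_eq_abs, abs_of_pos (sub_pos.2 hab)] at hint
  rw [mAvg, div_le_iff₀ (sub_pos.2 hab)]
  exact (le_abs_self _).trans hint

theorem mAvg_le_uMax (hC : ∀ t, |f t| ≤ C) (hab : a < b) (haz : a ≤ z) (hzb : z ≤ b) :
    mAvg f a b ≤ uMax f z :=
  le_csSup ⟨C, by rintro _ ⟨a', b', hab', -, -, rfl⟩; exact mAvg_le_of_abs_le hC hab'⟩
    ⟨a, b, hab, haz, hzb, rfl⟩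

theorem hasDerivAt_mAvg_left (hint : IntervalIntegrable (fun t => |f t|) volume z b)
    (hmeas : StronglyMeasurableAtFilter (fun t => |f t|) (𝓝 z))
    (hcont : ContinuousAt (fun t => |f t|) z) (hzb : z < b) :
    HasDerivAt (fun y => mAvg f y b) ((mAvg f z b - |f z|) / (b - z)) z := by
  have hlen : b - z ≠ 0 := sub_ne_zero.2 hzb.ne'
  refine HasDerivAt.congr_deriv (f := fun y => mAvg f y b)
    ((intervalIntegral.integral_hasDerivAt_left hint hmeas hcont).div
      ((hasDerivAt_id z).const_sub b) hlen) ?_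
  simp only [mAvg]
  field_simp
  ring

end Averages

theorem deriv_eq_of_eventually_le_of_eq {f g : ℝ → ℝ} {x g' : ℝ} (hf : DifferentiableAt ℝ f x)
    (hg : HasDerivAt g g' x) (hle : g ≤ᶠ[𝓝 x] f) (heq : f x = g x) : deriv f x = g' := by
  have hmin : IsLocalMin (f - g) x := by
    filter_upwards [hle] with y hy
    simp only [Pi.sub_apply, heq, sub_self, sub_nonneg, hy]
  linarith [hmin.hasDerivAt_eq_zero (hf.hasDerivAt.sub hg)]

theorem stmt11_general (f : ℝ → ℝ) (hf : BVfun f) (x : ℝ)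
    (hdiff : DifferentiableAt ℝ (uMax f) x)
    (hcont : ContinuousAt (fun y => |f y|) x)
    (ax : ℝ) (hax : x < ax)
    (havg : mAvg f x ax = uMax f x) :
    deriv (uMax f) x = (uMax f x - |f x|) / (ax - x) := by
  have hloc := hf.locallyBoundedVariationOn
  have hderiv : HasDerivAt (fun y => mAvg f y ax) ((uMax f x - |f x|) / (ax - x)) x := by
    rw [← havg]
    exact hasDerivAt_mAvg_left (hloc.intervalIntegrable x ax).abs
      hloc.measurable.abs.aestronglyMeasurable.stronglyMeasurableAtFilter hcont hax
  refine deriv_eq_of_eventually_le_of_eq hdiff hderiv ?_ havg.symm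
  filter_upwards [Iio_mem_nhds hax] with y hy
  exact mAvg_le_uMax (hf.abs_le 0) hy le_rfl hy.le

theorem stmt11 (f : ℝ → ℝ) (hf : BVfun f) (x : ℝ)
    (hdiff : DifferentiableAt ℝ (uMax f) x)
    (hcont : ContinuousAt (fun y => |f y|) x)
    (ax : ℝ) (hax : x < ax)
    (havg : mAvg f x ax = uMax f x)
    (hgt : |f x| < uMax f x) :
    deriv (uMax f) x = (uMax f x - |f x|) / (ax - x) :=
  stmt11_general f hf x hdiff hcont ax hax havg
end

section
/- Let A = ⋃_{k=1}^∞ (4k−2, 4k), f = χ_{(−∞,0) ∪ A}, and f_n = f + (1/n)·χ_{(0, 4n+2)}. Then ‖f_n − f‖_{BV} → 0 but ‖M̃f_n − M̃f‖_{BV} does not tend to 0. In particular: M̃f ≡ 1 on ℝ; for each n, M̃f_n(x) = 1 + 1/n for x ∈ {3, 7, …, 4n−1}; and for n ≥ 3, M̃f_n(x) ≤ 1 for x ∈ {1, 5, …, 4n+1}; hence Var(M̃f_n − M̃f) ≥ 2. -/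
open MeasureTheory Filter Set Topology

/-!
For `n ≥ 3`, `f_n` lies below the step profile equal to `1/3` on the gaps `(4j, 4j+2)` and to
`4/3` on the bumps `(4j+2, 4j+4)`. Along such a profile `t ↦ ∫₀ᵗ f_n - t` loses `2/3` on
`[4j+1, 4j+2]`, regains at most `2/3` on the bump and loses again on `[4j+4, 4j+5]`, so each point
`4k+1` is a running maximum to its right and a running minimum to its left: no interval through
`4k+1` has average above `1`. Hence `M̃f_n = 1` at these points and outside `[1, 4n+1]`, it equals
`1 + 1/n` on the bumps, and it is monotone between consecutive odd integers. Its variation is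
therefore the sum of `2n` jumps of size `1/n`, namely `2`, while `M̃f ≡ 1` and `‖f_n - f‖_BV = 2/n`.
-/

section Variation

theorem eVariationOn_neg (g : ℝ → ℝ) (s : Set ℝ) :
    eVariationOn (fun t => -g t) s = eVariationOn g s := by
  simp only [eVariationOn, edist_neg_neg]

theorem eVariationOn_sub_const (g : ℝ → ℝ) (c : ℝ) (s : Set ℝ) :
    eVariationOn (fun t => g t - c) s = eVariationOn g s := by
  simp only [eVariationOn, edist_sub_right]

theorem MonotoneOn.eVariationOn_Icc {g : ℝ → ℝ} {a b : ℝ} (hg : MonotoneOn g (Icc a b))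
    (hab : a ≤ b) : eVariationOn g (Icc a b) = edist (g b) (g a) := by
  rw [← inter_self (Icc a b), hg.eVariationOn_eq (left_mem_Icc.2 hab) (right_mem_Icc.2 hab),
    edist_dist, Real.dist_eq, abs_of_nonneg (sub_nonneg.2 (hg (left_mem_Icc.2 hab)
      (right_mem_Icc.2 hab) hab))]

theorem AntitoneOn.eVariationOn_Icc {g : ℝ → ℝ} {a b : ℝ} (hg : AntitoneOn g (Icc a b))
    (hab : a ≤ b) : eVariationOn g (Icc a b) = edist (g b) (g a) := by
  rw [← eVariationOn_neg, MonotoneOn.eVariationOn_Icc (fun x hx y hy hxy => neg_le_neg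
    (hg hx hy hxy)) hab, edist_neg_neg]

theorem eVariationOn_eq_zero_of_eqOn_const {g : ℝ → ℝ} {s : Set ℝ} {c : ℝ}
    (h : ∀ t ∈ s, g t = c) : eVariationOn g s = 0 :=
  eVariationOn.constant_on (subsingleton_singleton.anti (by rintro _ ⟨t, ht, rfl⟩; exact h t ht))

theorem eVariationOn_univ_eq_sum_of_monotoneOn_or_antitoneOn {g : ℝ → ℝ} {x : ℕ → ℝ}
    (hx : Monotone x) {m : ℕ} (hleft : ∀ t ≤ x 0, g t = g (x 0))
    (hright : ∀ t, x m ≤ t → g t = g (x m))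
    (hpiece : ∀ i < m, MonotoneOn g (Icc (x i) (x (i + 1))) ∨
      AntitoneOn g (Icc (x i) (x (i + 1)))) :
    eVariationOn g univ = ∑ i ∈ Finset.range m, edist (g (x (i + 1))) (g (x i)) := by
  refine le_antisymm ?_ (eVariationOn.sum_le hx fun i => mem_univ (x i))
  have hIcc : ∀ k ≤ m, eVariationOn g (Icc (x 0) (x k)) ≤
      ∑ i ∈ Finset.range k, edist (g (x (i + 1))) (g (x i)) := by
    intro k
    induction k with
    | zero => intro; simp
    | succ k ih =>
      intro hk
      have hsplit := eVariationOn.Icc_add_Icc g (hx (Nat.zero_le k)) (hx k.le_succ) (mem_univ _)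
      rw [univ_inter, univ_inter, univ_inter] at hsplit
      rw [← hsplit, Finset.sum_range_succ]
      gcongr
      · exact ih (by omega)
      · rcases hpiece k (by omega) with h | h <;> exact (h.eVariationOn_Icc (hx k.le_succ)).le
  rw [← Iic_union_Ici (a := x 0), eVariationOn.union g isGreatest_Iic isLeast_Ici,
    ← Icc_union_Ici_eq_Ici (hx (Nat.zero_le m)),
    eVariationOn.union g (isGreatest_Icc (hx (Nat.zero_le m))) ⟨self_mem_Ici, fun _ h => h⟩,
    eVariationOn_eq_zero_of_eqOn_const (s := Iic (x 0)) hleft,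
    eVariationOn_eq_zero_of_eqOn_const (s := Ici (x m)) hright,
    zero_add, add_zero]
  exact hIcc m le_rfl

theorem eVariationOn_indicator_Ioo {a b c : ℝ} (hab : a < b) (hc : 0 ≤ c) :
    eVariationOn ((Ioo a b).indicator fun _ => c) univ = ENNReal.ofReal (2 * c) := by
  set g := (Ioo a b).indicator fun _ => c
  have hg0 : ∀ t, 0 ≤ g t := indicator_nonneg fun _ _ => hc
  have hout : ∀ t ∉ Ioo a b, g t = 0 := fun t ht => indicator_of_notMem ht _
  have hin : ∀ t ∈ Ioo a b, g t = c := fun t ht => indicator_of_mem ht _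
  set x : ℕ → ℝ := fun i => a + (b - a) / 2 * (min i 2 : ℕ)
  have hx : Monotone x := fun i j hij => by
    have hba : 0 ≤ (b - a) / 2 := by linarith
    simp only [x]
    gcongr
  have hx0 : x 0 = a := by simp [x]
  have hx1 : x 1 = (a + b) / 2 := by simp [x]; ring
  have hx2 : x 2 = b := by simp [x]
  rw [eVariationOn_univ_eq_sum_of_monotoneOn_or_antitoneOn hx (m := 2)]
  · simp only [Finset.sum_range_succ, Finset.sum_range_zero, zero_add, hx0, hx1, hx2]
    rw [hin _ ⟨by linarith, by linarith⟩, hout a (fun h => h.1.false), hout b (fun h => h.2.false),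
      edist_comm (0 : ℝ), ← two_mul, edist_dist, Real.dist_eq, sub_zero, abs_of_nonneg hc,
      ENNReal.ofReal_mul zero_le_two, ENNReal.ofReal_ofNat]
  · intro t ht
    rw [hx0] at ht ⊢
    rw [hout t fun h => h.1.not_ge ht, hout a fun h => h.1.false]
  · intro t ht
    rw [hx2] at ht ⊢
    rw [hout t fun h => h.2.not_ge ht, hout b fun h => h.2.false]
  · intro i hi
    interval_cases i
    · left
      rw [hx0, zero_add, hx1]
      intro s hs t ht hst
      by_cases hs' : s ∈ Ioo a b
      · rw [hin s hs', hin t ⟨hs'.1.trans_le hst, by linarith [ht.2]⟩]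
      · rw [hout s hs']
        exact hg0 t
    · right
      rw [hx1, hx2]
      intro s hs t ht hst
      by_cases ht' : t ∈ Ioo a b
      · rw [hin t ht', hin s ⟨by linarith [hs.1], hst.trans_lt ht'.2⟩]
      · rw [hout t ht']
        exact hg0 s

theorem bvNorm_indicator_Ioo {a b c : ℝ} (hab : a < b) (hc : 0 ≤ c) :
    bvNorm ((Ioo a b).indicator fun _ => c) = 2 * c := by
  have hlim : limUnder atBot ((Ioo a b).indicator fun _ => c) = 0 := by
    refine Tendsto.limUnder_eq (tendsto_const_nhds.congr' ?_)
    filter_upwards [eventually_le_atBot a] with t ht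
    exact (indicator_of_notMem (fun h => h.1.not_ge ht) _).symm
  rw [bvNorm, hlim, abs_zero, zero_add, varOn, eVariationOn_indicator_Ioo hab hc,
    ENNReal.toReal_ofReal (by positivity)]

end Variation

section MaximalFunction

variable {g : ℝ → ℝ} {a b c x : ℝ}

theorem intervalIntegrable_of_abs_le {C : ℝ} (hg : Measurable g)
    (hC : ∀ t, |g t| ≤ C) (a b : ℝ) : IntervalIntegrable g volume a b :=
  (intervalIntegrable_const (c := C)).mono_fun hg.aestronglyMeasurable
    (Eventually.of_forall fun t => by
      simpa only [Real.norm_eq_abs] using (hC t).trans (le_abs_self C))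

theorem intervalIntegral.integral_le_of_le_on_Ioo (hint : IntervalIntegrable g volume a b)
    (hab : a ≤ b) (h : ∀ t ∈ Ioo a b, g t ≤ c) : ∫ t in a..b, g t ≤ c * (b - a) := by
  have := intervalIntegral.integral_mono_on_of_le_Ioo hab hint intervalIntegrable_const h
  rwa [intervalIntegral.integral_const, smul_eq_mul, mul_comm] at this

theorem intervalIntegral.integral_eq_of_eqOn_Ioo (hab : a ≤ b) (h : ∀ t ∈ Ioo a b, g t = c) :
    ∫ t in a..b, g t = c * (b - a) := by
  rw [intervalIntegral.integral_of_le hab, integral_Ioc_eq_integral_Ioo,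
    setIntegral_congr_fun measurableSet_Ioo h, setIntegral_const, smul_eq_mul,
    Real.volume_real_Ioo_of_le hab, mul_comm]

theorem mAvg_le_of_abs_le_on_Ioo (hint : IntervalIntegrable g volume a b) (hab : a < b)
    (h : ∀ t ∈ Ioo a b, |g t| ≤ c) : mAvg g a b ≤ c := by
  rw [mAvg, div_le_iff₀ (sub_pos.2 hab)]
  exact intervalIntegral.integral_le_of_le_on_Ioo hint.abs hab.le h

theorem mAvg_eq_of_abs_eqOn_Ioo (hab : a < b) (h : ∀ t ∈ Ioo a b, |g t| = c) :
    mAvg g a b = c := by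
  rw [mAvg, intervalIntegral.integral_eq_of_eqOn_Ioo hab.le h,
    mul_div_cancel_right₀ _ (sub_ne_zero.2 hab.ne')]

theorem mAvg_of_nonneg (hg : ∀ t, 0 ≤ g t) (a b : ℝ) :
    mAvg g a b = (∫ t in a..b, g t) / (b - a) := by
  simp only [mAvg, abs_of_nonneg (hg _)]

theorem mAvg_le_uMax_s19 {C : ℝ} (hint : ∀ a b, IntervalIntegrable g volume a b)
    (hC : ∀ t, |g t| ≤ C) (hab : a < b) (hax : a ≤ x) (hxb : x ≤ b) :
    mAvg g a b ≤ uMax g x := by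
  refine le_csSup ⟨C, ?_⟩ ⟨a, b, hab, hax, hxb, rfl⟩
  rintro _ ⟨a', b', hab', -, -, rfl⟩
  exact mAvg_le_of_abs_le_on_Ioo (hint a' b') hab' fun t _ => hC t

theorem uMax_le {M : ℝ} (h : ∀ a b, a < b → a ≤ x → x ≤ b → mAvg g a b ≤ M) :
    uMax g x ≤ M := by
  refine csSup_le ⟨_, x - 1, x, by linarith, by linarith, le_rfl, rfl⟩ ?_
  rintro _ ⟨a, b, hab, hax, hxb, rfl⟩
  exact h a b hab hax hxb

theorem uMax_le_of_abs_le {C : ℝ} (hint : ∀ a b, IntervalIntegrable g volume a b)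
    (hC : ∀ t, |g t| ≤ C) (x : ℝ) : uMax g x ≤ C :=
  uMax_le fun a b hab _ _ => mAvg_le_of_abs_le_on_Ioo (hint a b) hab fun t _ => hC t

theorem uMax_le_uMax {C y : ℝ} (hint : ∀ a b, IntervalIntegrable g volume a b)
    (hC : ∀ t, |g t| ≤ C)
    (h : ∀ a b, a < b → a ≤ x → x ≤ b → y ∉ Icc a b → mAvg g a b ≤ uMax g y) :
    uMax g x ≤ uMax g y := by
  refine uMax_le fun a b hab hax hxb => ?_
  by_cases hy : y ∈ Icc a b
  · exact mAvg_le_uMax_s19 hint hC hab hy.1 hy.2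
  · exact h a b hab hax hxb hy

/-- As `a → -∞`, the average over `[a, max x 0]` is at least `-a / (max x 0 - a) → 1`, since
`|g| = 1` on `(a, 0)`. -/
theorem one_le_uMax {C : ℝ} (hint : ∀ a b, IntervalIntegrable g volume a b)
    (hC : ∀ t, |g t| ≤ C) (h1 : ∀ t < 0, |g t| = 1) (x : ℝ) : 1 ≤ uMax g x := by
  set x₀ := max x 0
  have hx₀ : 0 ≤ x₀ := le_max_right x 0
  have hlim : Tendsto (fun a => 1 - x₀ / (x₀ - a)) atBot (𝓝 1) := by
    have hden : Tendsto (fun a => x₀ - a) atBot atTop :=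
      tendsto_atTop_add_const_left _ _ tendsto_neg_atBot_atTop
    simpa using (tendsto_const_nhds.div_atTop hden).const_sub 1
  refine le_of_tendsto hlim ?_
  filter_upwards [eventually_lt_atBot (min x 0)] with a ha
  have ha0 : a < 0 := ha.trans_le (min_le_right x 0)
  have hpos : 0 < x₀ - a := by linarith
  calc 1 - x₀ / (x₀ - a) = (1 * (0 - a)) / (x₀ - a) := by field_simp; ring
    _ ≤ ((∫ t in a..0, |g t|) + ∫ t in (0:ℝ)..x₀, |g t|) / (x₀ - a) := by
      rw [intervalIntegral.integral_eq_of_eqOn_Ioo ha0.le fun t ht => h1 t ht.2]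
      gcongr
      exact le_add_of_nonneg_right
        (intervalIntegral.integral_nonneg hx₀ fun t _ => abs_nonneg (g t))
    _ = mAvg g a x₀ := by
      rw [mAvg, intervalIntegral.integral_add_adjacent_intervals (hint a 0).abs (hint 0 x₀).abs]
    _ ≤ uMax g x := mAvg_le_uMax_s19 hint hC (by linarith) (ha.le.trans (min_le_left x 0))
        (le_max_left x 0)

end MaximalFunction

/-- Normalized so that `∫ₐᵇ g ≤ b - a` iff `excess g b ≤ excess g a`. -/
noncomputable def excess (g : ℝ → ℝ) (t : ℝ) : ℝ := (∫ s in (0:ℝ)..t, g s) - t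

theorem excess_sub_excess {g : ℝ → ℝ} (hint : ∀ a b, IntervalIntegrable g volume a b)
    (a b : ℝ) : excess g b - excess g a = (∫ t in a..b, g t) - (b - a) := by
  rw [excess, excess, ← intervalIntegral.integral_interval_sub_left (hint 0 b) (hint 0 a)]
  ring

theorem excess_le_of_le_on_Ioo {g : ℝ → ℝ} (hint : ∀ a b, IntervalIntegrable g volume a b)
    {s t c : ℝ} (hst : s ≤ t) (h : ∀ x ∈ Ioo s t, g x ≤ c) :
    excess g t ≤ excess g s + (c - 1) * (t - s) := by
  have := intervalIntegral.integral_le_of_le_on_Ioo (hint s t) hst h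
  have := excess_sub_excess hint s t
  linarith

structure BelowStepProfile (g : ℝ → ℝ) : Prop where
  intervalIntegrable : ∀ a b, IntervalIntegrable g volume a b
  le_one_of_neg : ∀ t < 0, g t ≤ 1
  le_of_mem_gap : ∀ j : ℕ, ∀ t ∈ Ioo (4 * (j : ℝ)) (4 * j + 2), g t ≤ 1 / 3
  le_of_mem_bump : ∀ j : ℕ, ∀ t ∈ Ioo (4 * (j : ℝ) + 2) (4 * j + 4), g t ≤ 4 / 3

theorem exists_nat_four_mul_add_one_le {a : ℝ} (ha : 1 ≤ a) :
    ∃ j : ℕ, 4 * (j : ℝ) + 1 ≤ a ∧ a < 4 * j + 5 := by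
  refine ⟨⌊(a - 1) / 4⌋₊, ?_, ?_⟩
  · linarith [Nat.floor_le (show 0 ≤ (a - 1) / 4 by linarith)]
  · linarith [Nat.lt_floor_add_one ((a - 1) / 4)]

namespace BelowStepProfile

variable {g : ℝ → ℝ} {a b s t : ℝ}

theorem excess_le_of_gap (hg : BelowStepProfile g) (j : ℕ) (hs : 4 * (j : ℝ) ≤ s)
    (hst : s ≤ t) (ht : t ≤ 4 * j + 2) : excess g t ≤ excess g s - 2 / 3 * (t - s) := by
  have := excess_le_of_le_on_Ioo hg.intervalIntegrable hst fun x hx =>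
    hg.le_of_mem_gap j x ⟨hs.trans_lt hx.1, hx.2.trans_le ht⟩
  linarith

theorem excess_le_of_bump (hg : BelowStepProfile g) (j : ℕ) (hs : 4 * (j : ℝ) + 2 ≤ s)
    (hst : s ≤ t) (ht : t ≤ 4 * j + 4) : excess g t ≤ excess g s + 1 / 3 * (t - s) := by
  have := excess_le_of_le_on_Ioo hg.intervalIntegrable hst fun x hx =>
    hg.le_of_mem_bump j x ⟨hs.trans_lt hx.1, hx.2.trans_le ht⟩
  linarith

theorem excess_le_of_next_gap (hg : BelowStepProfile g) (j : ℕ) (hs : 4 * (j : ℝ) + 4 ≤ s)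
    (hst : s ≤ t) (ht : t ≤ 4 * j + 5) : excess g t ≤ excess g s - 2 / 3 * (t - s) :=
  hg.excess_le_of_gap (j + 1) (by push_cast; linarith) hst (by push_cast; linarith)

/-- Across the gap `(4j+1, 4j+2)` the excess drops by `2/3`, which the bump `(4j+2, 4j+4)`
can at most win back. -/
theorem excess_le_excess_four_mul_add_one (hg : BelowStepProfile g) (j : ℕ)
    (hb : 4 * (j : ℝ) + 1 ≤ b) (hb' : b ≤ 4 * j + 5) : excess g b ≤ excess g (4 * j + 1) := by
  rcases le_total b (4 * j + 2) with hb2 | hb2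
  · linarith [hg.excess_le_of_gap j (s := 4 * j + 1) (by linarith) hb hb2]
  have hgap := hg.excess_le_of_gap j (s := 4 * j + 1) (t := 4 * j + 2) (by linarith)
    (by linarith) le_rfl
  rcases le_total b (4 * j + 4) with hb4 | hb4
  · linarith [hg.excess_le_of_bump j le_rfl hb2 hb4]
  linarith [hg.excess_le_of_bump j (t := 4 * j + 4) le_rfl (by linarith) le_rfl,
    hg.excess_le_of_next_gap j le_rfl hb4 hb']

theorem excess_four_mul_add_five_le (hg : BelowStepProfile g) (j : ℕ)
    (ha : 4 * (j : ℝ) + 1 ≤ a) (ha' : a ≤ 4 * j + 5) : excess g (4 * j + 5) ≤ excess g a := by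
  rcases le_total (4 * (j : ℝ) + 4) a with ha4 | ha4
  · linarith [hg.excess_le_of_next_gap j ha4 ha' le_rfl]
  have hgap := hg.excess_le_of_next_gap j (s := 4 * j + 4) (t := 4 * j + 5) le_rfl
    (by linarith) le_rfl
  rcases le_total (4 * (j : ℝ) + 2) a with ha2 | ha2
  · linarith [hg.excess_le_of_bump j ha2 ha4 le_rfl]
  linarith [hg.excess_le_of_bump j (s := 4 * j + 2) (t := 4 * j + 4) le_rfl (by linarith) le_rfl,
    hg.excess_le_of_gap j (by linarith) ha2 le_rfl]

theorem antitone_excess_four_mul_add_one (hg : BelowStepProfile g) :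
    Antitone fun j : ℕ => excess g (4 * j + 1) :=
  antitone_nat_of_succ_le fun j => by
    have := hg.excess_le_excess_four_mul_add_one j (b := 4 * j + 5) (by linarith) le_rfl
    rwa [show 4 * (j : ℝ) + 5 = 4 * ((j + 1 : ℕ) : ℝ) + 1 by push_cast; ring] at this

theorem excess_le_of_four_mul_add_one_le (hg : BelowStepProfile g) (k : ℕ)
    (hb : 4 * (k : ℝ) + 1 ≤ b) : excess g b ≤ excess g (4 * k + 1) := by
  obtain ⟨j, hj, hj'⟩ := exists_nat_four_mul_add_one_le (by linarith [k.cast_nonneg (α := ℝ)])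
  have hkj : (k : ℝ) < j + 1 := by linarith
  exact (hg.excess_le_excess_four_mul_add_one j hj hj'.le).trans
    (hg.antitone_excess_four_mul_add_one (Nat.lt_succ_iff.1 (by exact_mod_cast hkj)))

theorem excess_four_mul_add_one_le_of_le (hg : BelowStepProfile g) (k : ℕ)
    (ha : a ≤ 4 * k + 1) : excess g (4 * k + 1) ≤ excess g a := by
  rcases lt_or_ge a 1 with ha1 | ha1
  · have hneg := excess_le_of_le_on_Ioo hg.intervalIntegrable (le_max_left a 0)
      fun x hx => hg.le_one_of_neg x ((lt_max_iff.1 hx.2).resolve_left hx.1.not_gt)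
    have hgap := hg.excess_le_of_gap 0 (s := max a 0) (t := 1) (by simp) (by simp [ha1.le])
      (by norm_num)
    have hrec := hg.antitone_excess_four_mul_add_one (Nat.zero_le k)
    simp only [Nat.cast_zero, mul_zero, zero_add] at hgap hrec
    rw [sub_self, zero_mul, add_zero] at hneg
    linarith [max_le ha1.le zero_le_one]
  obtain ⟨j, hj, hj'⟩ := exists_nat_four_mul_add_one_le ha1
  have hjk : (j : ℝ) ≤ k := by linarith
  rcases (Nat.cast_le.1 hjk).lt_or_eq with hjk | rfl
  · have := hg.antitone_excess_four_mul_add_one (Nat.succ_le_of_lt hjk)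
    simp only [Nat.succ_eq_add_one, Nat.cast_add_one] at this
    rw [show 4 * ((j : ℝ) + 1) + 1 = 4 * j + 5 by ring] at this
    linarith [hg.excess_four_mul_add_five_le j (a := a) hj hj'.le]
  · rw [show a = 4 * j + 1 by linarith]

theorem integral_le_sub_of_mem_Icc (hg : BelowStepProfile g) (k : ℕ)
    (hk : 4 * (k : ℝ) + 1 ∈ Icc a b) : ∫ t in a..b, g t ≤ b - a := by
  have := excess_sub_excess hg.intervalIntegrable a b
  linarith [hg.excess_le_of_four_mul_add_one_le k hk.2, hg.excess_four_mul_add_one_le_of_le k hk.1]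

end BelowStepProfile

def bumps : Set ℝ := ⋃ k : ℕ, Ioo (4 * (k : ℝ) + 2) (4 * (k : ℝ) + 4)

noncomputable def baseFn : ℝ → ℝ := (Iio (0:ℝ) ∪ bumps).indicator fun _ => 1

noncomputable def perturbedFn (n : ℕ) : ℝ → ℝ :=
  baseFn + (Ioo (0:ℝ) (4 * (n : ℝ) + 2)).indicator fun _ => 1 / (n : ℝ)

section PerturbedFn

variable {n : ℕ} {t : ℝ}

theorem measurable_baseFn : Measurable baseFn :=
  measurable_const.indicator
    (measurableSet_Iio.union (MeasurableSet.iUnion fun _ => measurableSet_Ioo))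

theorem baseFn_nonneg (t : ℝ) : 0 ≤ baseFn t :=
  indicator_nonneg (fun _ _ => zero_le_one) t

theorem baseFn_le_one (t : ℝ) : baseFn t ≤ 1 :=
  indicator_le_self' (fun _ _ => zero_le_one) t

theorem abs_baseFn_le_one (t : ℝ) : |baseFn t| ≤ 1 := by
  rw [abs_of_nonneg (baseFn_nonneg t)]
  exact baseFn_le_one t

theorem baseFn_of_neg (ht : t < 0) : baseFn t = 1 :=
  indicator_of_mem (show t ∈ Iio 0 ∪ bumps from Or.inl ht) _

theorem baseFn_of_mem_bump (j : ℕ) (ht : t ∈ Ioo (4 * (j : ℝ) + 2) (4 * j + 4)) : baseFn t = 1 :=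
  indicator_of_mem (show t ∈ Iio 0 ∪ bumps from Or.inr (mem_iUnion.2 ⟨j, ht⟩)) _

theorem baseFn_of_mem_gap (j : ℕ) (ht : t ∈ Icc (4 * (j : ℝ)) (4 * j + 2)) : baseFn t = 0 := by
  refine indicator_of_notMem ?_ _
  rintro (ht' | ht')
  · linarith [ht.1, ht'.out, j.cast_nonneg (α := ℝ)]
  obtain ⟨i, hi⟩ := mem_iUnion.1 ht'
  have hij : (i : ℝ) < j := by linarith [hi.1, ht.2]
  have hij' : (i : ℝ) + 1 ≤ j := by exact_mod_cast Nat.cast_lt.1 hij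
  linarith [hi.2, ht.1]

theorem uMax_baseFn : uMax baseFn = 1 := by
  have hint := intervalIntegrable_of_abs_le measurable_baseFn abs_baseFn_le_one
  funext x
  exact le_antisymm (uMax_le_of_abs_le hint abs_baseFn_le_one x)
    (one_le_uMax hint abs_baseFn_le_one (fun t ht => by rw [baseFn_of_neg ht, abs_one]) x)

theorem perturbedFn_apply (n : ℕ) (t : ℝ) : perturbedFn n t =
    baseFn t + (Ioo (0:ℝ) (4 * (n : ℝ) + 2)).indicator (fun _ => 1 / (n : ℝ)) t :=
  rfl

theorem perturbedFn_sub_baseFn (n : ℕ) :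
    perturbedFn n - baseFn = (Ioo (0:ℝ) (4 * (n : ℝ) + 2)).indicator fun _ => 1 / (n : ℝ) :=
  add_sub_cancel_left _ _

theorem perturbedFn_nonneg (n : ℕ) (t : ℝ) : 0 ≤ perturbedFn n t :=
  add_nonneg (baseFn_nonneg t) (indicator_nonneg (fun _ _ => by positivity) t)

theorem abs_perturbedFn_le (n : ℕ) (t : ℝ) : |perturbedFn n t| ≤ 1 + 1 / n := by
  rw [abs_of_nonneg (perturbedFn_nonneg n t), perturbedFn_apply]
  exact add_le_add (baseFn_le_one t) (indicator_le_self' (fun _ _ => by positivity) t)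

theorem measurable_perturbedFn (n : ℕ) : Measurable (perturbedFn n) :=
  measurable_baseFn.add (measurable_const.indicator measurableSet_Ioo)

theorem intervalIntegrable_perturbedFn (n : ℕ) (a b : ℝ) :
    IntervalIntegrable (perturbedFn n) volume a b :=
  intervalIntegrable_of_abs_le (measurable_perturbedFn n) (abs_perturbedFn_le n) a b

theorem perturbedFn_of_neg (ht : t < 0) : perturbedFn n t = 1 := by
  rw [perturbedFn_apply, baseFn_of_neg ht, indicator_of_notMem fun h => by linarith [h.1],
    add_zero]

theorem perturbedFn_of_mem_bump {j : ℕ} (hj : j < n)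
    (ht : t ∈ Ioo (4 * (j : ℝ) + 2) (4 * j + 4)) : perturbedFn n t = 1 + 1 / n := by
  have hj' : (j : ℝ) + 1 ≤ n := by exact_mod_cast hj
  rw [perturbedFn_apply, baseFn_of_mem_bump j ht, indicator_of_mem]
  constructor <;> linarith [ht.1, ht.2, j.cast_nonneg (α := ℝ)]

theorem perturbedFn_le_of_mem_gap (j : ℕ) (ht : t ∈ Icc (4 * (j : ℝ)) (4 * j + 2)) :
    perturbedFn n t ≤ 1 / n := by
  rw [perturbedFn_apply, baseFn_of_mem_gap j ht, zero_add]
  exact indicator_le_self' (fun _ _ => by positivity) t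

theorem perturbedFn_le_one_of_le_two (hn : 1 ≤ n) (ht : t ≤ 2) : perturbedFn n t ≤ 1 := by
  have hn' : 1 / (n : ℝ) ≤ 1 := div_le_one_of_le₀ (by exact_mod_cast hn) n.cast_nonneg
  rcases lt_or_ge t 0 with ht0 | ht0
  · exact (perturbedFn_of_neg ht0).le
  · exact (perturbedFn_le_of_mem_gap 0 (by simp [ht0, ht])).trans hn'

theorem perturbedFn_le_one_of_ge (hn : 1 ≤ n) (ht : 4 * (n : ℝ) ≤ t) : perturbedFn n t ≤ 1 := by
  have hn' : 1 / (n : ℝ) ≤ 1 := div_le_one_of_le₀ (by exact_mod_cast hn) n.cast_nonneg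
  rcases le_or_gt t (4 * n + 2) with ht2 | ht2
  · exact (perturbedFn_le_of_mem_gap n ⟨ht, ht2⟩).trans hn'
  · rw [perturbedFn_apply, indicator_of_notMem fun h => by linarith [h.2], add_zero]
    exact baseFn_le_one t

theorem belowStepProfile_perturbedFn (hn : 3 ≤ n) : BelowStepProfile (perturbedFn n) where
  intervalIntegrable := intervalIntegrable_perturbedFn n
  le_one_of_neg _ ht := (perturbedFn_of_neg ht).le
  le_of_mem_gap j _ ht := (perturbedFn_le_of_mem_gap j (Ioo_subset_Icc_self ht)).trans
    (by rw [div_le_div_iff_of_pos_left one_pos (by positivity) three_pos]; exact_mod_cast hn)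
  le_of_mem_bump _ t _ := by
    have h := abs_perturbedFn_le n t
    have h3 : 1 / (n : ℝ) ≤ 1 / 3 := by
      rw [div_le_div_iff_of_pos_left one_pos (by positivity) three_pos]; exact_mod_cast hn
    linarith [le_abs_self (perturbedFn n t)]

theorem uMax_perturbedFn_le (n : ℕ) (x : ℝ) : uMax (perturbedFn n) x ≤ 1 + 1 / n :=
  uMax_le_of_abs_le (intervalIntegrable_perturbedFn n) (abs_perturbedFn_le n) x

theorem one_le_uMax_perturbedFn (n : ℕ) (x : ℝ) : 1 ≤ uMax (perturbedFn n) x :=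
  one_le_uMax (intervalIntegrable_perturbedFn n) (abs_perturbedFn_le n)
    (fun t ht => by rw [perturbedFn_of_neg ht, abs_one]) x

theorem mAvg_perturbedFn_le_uMax {a b x : ℝ} (hab : a < b) (hax : a ≤ x) (hxb : x ≤ b) :
    mAvg (perturbedFn n) a b ≤ uMax (perturbedFn n) x :=
  mAvg_le_uMax_s19 (intervalIntegrable_perturbedFn n) (abs_perturbedFn_le n) hab hax hxb

theorem mAvg_perturbedFn_le_one_of_le_one {a b : ℝ} (hab : a < b)
    (h : ∀ t ∈ Ioo a b, perturbedFn n t ≤ 1) : mAvg (perturbedFn n) a b ≤ 1 :=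
  mAvg_le_of_abs_le_on_Ioo (intervalIntegrable_perturbedFn n a b) hab fun t ht => by
    rw [abs_of_nonneg (perturbedFn_nonneg n t)]; exact h t ht

theorem mAvg_perturbedFn_le_one_of_mem_gap (hn : 1 ≤ n) (j : ℕ) {a b : ℝ} (hab : a < b)
    (ha : 4 * (j : ℝ) ≤ a) (hb : b ≤ 4 * j + 2) : mAvg (perturbedFn n) a b ≤ 1 :=
  mAvg_perturbedFn_le_one_of_le_one hab fun t ht =>
    (perturbedFn_le_of_mem_gap j ⟨ha.trans ht.1.le, ht.2.le.trans hb⟩).trans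
      (div_le_one_of_le₀ (by exact_mod_cast hn) n.cast_nonneg)

theorem mAvg_perturbedFn_le_one_of_mem (hn : 3 ≤ n) (k : ℕ) {a b : ℝ} (hab : a < b)
    (hk : 4 * (k : ℝ) + 1 ∈ Icc a b) : mAvg (perturbedFn n) a b ≤ 1 := by
  rw [mAvg_of_nonneg (perturbedFn_nonneg n), div_le_one (sub_pos.2 hab)]
  exact (belowStepProfile_perturbedFn hn).integral_le_sub_of_mem_Icc k hk

theorem uMax_perturbedFn_eq_one {x : ℝ}
    (h : ∀ a b, a < b → a ≤ x → x ≤ b → mAvg (perturbedFn n) a b ≤ 1) :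
    uMax (perturbedFn n) x = 1 :=
  le_antisymm (uMax_le h) (one_le_uMax_perturbedFn n x)

theorem uMax_perturbedFn_four_mul_add_one (hn : 3 ≤ n) (k : ℕ) :
    uMax (perturbedFn n) (4 * k + 1) = 1 :=
  uMax_perturbedFn_eq_one fun _ _ hab hax hxb => mAvg_perturbedFn_le_one_of_mem hn k hab ⟨hax, hxb⟩

theorem uMax_perturbedFn_of_le_one (hn : 3 ≤ n) {x : ℝ} (hx : x ≤ 1) :
    uMax (perturbedFn n) x = 1 := by
  refine uMax_perturbedFn_eq_one fun a b hab hax hxb => ?_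
  rcases le_or_gt 1 b with hb | hb
  · exact mAvg_perturbedFn_le_one_of_mem hn 0 hab (by norm_num; constructor <;> linarith)
  · exact mAvg_perturbedFn_le_one_of_le_one hab fun t ht =>
      perturbedFn_le_one_of_le_two (by omega) (by linarith [ht.2])

theorem uMax_perturbedFn_of_ge (hn : 3 ≤ n) {x : ℝ} (hx : 4 * (n : ℝ) + 1 ≤ x) :
    uMax (perturbedFn n) x = 1 := by
  refine uMax_perturbedFn_eq_one fun a b hab hax hxb => ?_
  rcases le_or_gt a (4 * n + 1) with ha | ha
  · exact mAvg_perturbedFn_le_one_of_mem hn n hab ⟨ha, by linarith⟩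
  · exact mAvg_perturbedFn_le_one_of_le_one hab fun t ht =>
      perturbedFn_le_one_of_ge (by omega) (by linarith [ht.1])

theorem uMax_perturbedFn_of_mem_bump {j : ℕ} (hj : j < n) {x : ℝ}
    (hx : x ∈ Icc (4 * (j : ℝ) + 2) (4 * j + 4)) : uMax (perturbedFn n) x = 1 + 1 / n := by
  refine le_antisymm (uMax_perturbedFn_le n x) ?_
  have hbump : mAvg (perturbedFn n) (4 * j + 2) (4 * j + 4) = 1 + 1 / n :=
    mAvg_eq_of_abs_eqOn_Ioo (by linarith) fun t ht => by
      rw [perturbedFn_of_mem_bump hj ht, abs_of_nonneg (by positivity)]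
  exact hbump ▸ mAvg_perturbedFn_le_uMax (by linarith) hx.1 hx.2

theorem monotoneOn_uMax_perturbedFn (hn : 3 ≤ n) {k : ℕ} (hk : k < n) :
    MonotoneOn (uMax (perturbedFn n)) (Icc (4 * (k : ℝ) + 1) (4 * k + 3)) := by
  intro x hx y hy hxy
  refine uMax_le_uMax (intervalIntegrable_perturbedFn n) (abs_perturbedFn_le n)
    fun a b hab hax hxb hyab => ?_
  have hby : b < y := lt_of_not_ge fun hyb => hyab ⟨hax.trans hxy, hyb⟩
  rcases le_or_gt a (4 * k + 1) with ha | ha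
  · exact (mAvg_perturbedFn_le_one_of_mem hn k hab ⟨ha, hx.1.trans hxb⟩).trans
      (one_le_uMax_perturbedFn n y)
  rcases le_or_gt b (4 * k + 2) with hb | hb
  · exact (mAvg_perturbedFn_le_one_of_mem_gap (by omega) k hab (by linarith) hb).trans
      (one_le_uMax_perturbedFn n y)
  · rw [uMax_perturbedFn_of_mem_bump hk ⟨by linarith, by linarith [hy.2]⟩]
    exact mAvg_le_of_abs_le_on_Ioo (intervalIntegrable_perturbedFn n a b) hab
      fun t _ => abs_perturbedFn_le n t

theorem antitoneOn_uMax_perturbedFn (hn : 3 ≤ n) {k : ℕ} (hk : k < n) :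
    AntitoneOn (uMax (perturbedFn n)) (Icc (4 * (k : ℝ) + 3) (4 * k + 5)) := by
  intro x hx y hy hxy
  refine uMax_le_uMax (intervalIntegrable_perturbedFn n) (abs_perturbedFn_le n)
    fun a b hab hay hyb hxab => ?_
  have hxa : x < a := lt_of_not_ge fun hax => hxab ⟨hax, hxy.trans hyb⟩
  rcases le_or_gt (4 * (k : ℝ) + 5) b with hb | hb
  · refine (mAvg_perturbedFn_le_one_of_mem hn (k + 1) hab ?_).trans (one_le_uMax_perturbedFn n x)
    push_cast
    constructor <;> linarith [hy.2]
  rcases le_or_gt (4 * (k : ℝ) + 4) a with ha | ha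
  · refine (mAvg_perturbedFn_le_one_of_mem_gap (by omega) (k + 1) hab ?_ ?_).trans
      (one_le_uMax_perturbedFn n x) <;> push_cast <;> linarith
  · rw [uMax_perturbedFn_of_mem_bump hk ⟨by linarith [hx.1], by linarith⟩]
    exact mAvg_le_of_abs_le_on_Ioo (intervalIntegrable_perturbedFn n a b) hab
      fun t _ => abs_perturbedFn_le n t

theorem eVariationOn_uMax_perturbedFn (hn : 3 ≤ n) :
    eVariationOn (uMax (perturbedFn n)) univ = 2 := by
  have hx : Monotone fun i : ℕ => 2 * (i : ℝ) + 1 := fun i j hij => by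
    dsimp only
    gcongr
  rw [eVariationOn_univ_eq_sum_of_monotoneOn_or_antitoneOn hx (m := 2 * n)]
  · have hterm : ∀ i ∈ Finset.range (2 * n),
        edist (uMax (perturbedFn n) (2 * ((i + 1 : ℕ) : ℝ) + 1))
          (uMax (perturbedFn n) (2 * (i : ℝ) + 1)) = ENNReal.ofReal (1 / n) := by
      intro i hi
      have hi := Finset.mem_range.1 hi
      obtain ⟨k, rfl | rfl⟩ := Nat.even_or_odd' i
      · rw [show 2 * ((2 * k + 1 : ℕ) : ℝ) + 1 = 4 * k + 3 by push_cast; ring,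
          show 2 * ((2 * k : ℕ) : ℝ) + 1 = 4 * k + 1 by push_cast; ring,
          uMax_perturbedFn_four_mul_add_one hn,
          uMax_perturbedFn_of_mem_bump (j := k) (by omega) ⟨by linarith, by linarith⟩,
          edist_dist, Real.dist_eq, add_sub_cancel_left, abs_of_nonneg (by positivity)]
      · rw [show 2 * ((2 * k + 1 + 1 : ℕ) : ℝ) + 1 = 4 * ((k + 1 : ℕ) : ℝ) + 1 by push_cast; ring,
          show 2 * ((2 * k + 1 : ℕ) : ℝ) + 1 = 4 * k + 3 by push_cast; ring,
          uMax_perturbedFn_four_mul_add_one hn,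
          uMax_perturbedFn_of_mem_bump (j := k) (by omega) ⟨by linarith, by linarith⟩,
          edist_dist, Real.dist_eq, sub_add_cancel_left, abs_neg, abs_of_nonneg (by positivity)]
    rw [Finset.sum_congr rfl hterm, Finset.sum_const, Finset.card_range, nsmul_eq_mul,
      ← ENNReal.ofReal_natCast, ← ENNReal.ofReal_mul (by positivity)]
    have hn0 : (n : ℝ) ≠ 0 := by positivity
    rw [show ((2 * n : ℕ) : ℝ) * (1 / n) = 2 by push_cast; field_simp, ENNReal.ofReal_ofNat]
  · intro t ht
    rw [uMax_perturbedFn_of_le_one hn (by simpa using ht), uMax_perturbedFn_of_le_one hn (by simp)]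
  · intro t ht
    have h4 : 2 * ((2 * n : ℕ) : ℝ) + 1 = 4 * n + 1 := by push_cast; ring
    rw [h4] at ht ⊢
    rw [uMax_perturbedFn_of_ge hn ht, uMax_perturbedFn_of_ge hn le_rfl]
  · intro i hi
    obtain ⟨k, rfl | rfl⟩ := Nat.even_or_odd' i
    · left
      convert monotoneOn_uMax_perturbedFn hn (k := k) (by omega) using 2 <;> push_cast <;> ring
    · right
      convert antitoneOn_uMax_perturbedFn hn (k := k) (by omega) using 2 <;> push_cast <;> ring

end PerturbedFn

theorem stmt19 (A : Set ℝ) (hA : A = ⋃ k : ℕ, Set.Ioo (4 * (k : ℝ) + 2) (4 * (k : ℝ) + 4))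
    (f : ℝ → ℝ) (hf : f = Set.indicator (Set.Iio (0:ℝ) ∪ A) (fun _ => (1:ℝ)))
    (fn : ℕ → ℝ → ℝ)
    (hfn : ∀ n, fn n = f + Set.indicator (Set.Ioo (0:ℝ) (4 * (n : ℝ) + 2)) (fun _ => 1 / (n : ℝ))) :
    Tendsto (fun n => bvNorm (fn n - f)) atTop (𝓝 0) ∧
    ¬ Tendsto (fun n => bvNorm (uMax (fn n) - uMax f)) atTop (𝓝 0) ∧
    (∀ x : ℝ, uMax f x = 1) ∧
    (∀ n : ℕ, 1 ≤ n → ∀ k : ℕ, 1 ≤ k → k ≤ n →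
      uMax (fn n) (4 * (k : ℝ) - 1) = 1 + 1 / (n : ℝ)) ∧
    (∀ n : ℕ, 3 ≤ n → ∀ k : ℕ, k ≤ n →
      uMax (fn n) (4 * (k : ℝ) + 1) ≤ 1) ∧
    (∀ n : ℕ, 3 ≤ n → 2 ≤ eVariationOn (uMax (fn n) - uMax f) Set.univ) := by
  subst hA
  obtain rfl : f = baseFn := hf
  obtain rfl : fn = perturbedFn := funext hfn
  have hvar (n : ℕ) (hn : 3 ≤ n) :
      eVariationOn (uMax (perturbedFn n) - uMax baseFn) univ = 2 := by
    rw [uMax_baseFn]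
    exact (eVariationOn_sub_const _ 1 univ).trans (eVariationOn_uMax_perturbedFn hn)
  refine ⟨?_, fun hT => ?_, congrFun uMax_baseFn, fun n _ k hk1 hkn => ?_,
    fun n hn k _ => (uMax_perturbedFn_four_mul_add_one hn k).le, fun n hn => (hvar n hn).ge⟩
  · have hnorm (n : ℕ) : bvNorm (perturbedFn n - baseFn) = 2 * (1 / n) := by
      rw [perturbedFn_sub_baseFn, bvNorm_indicator_Ioo (by positivity) (by positivity)]
    simpa [hnorm] using tendsto_one_div_atTop_nhds_zero_nat.const_mul (2 : ℝ)
  · have hnorm (n : ℕ) (hn : 3 ≤ n) : 2 ≤ bvNorm (uMax (perturbedFn n) - uMax baseFn) := by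
      rw [bvNorm, varOn, hvar n hn, ENNReal.toReal_ofNat]
      exact le_add_of_nonneg_left (abs_nonneg _)
    have := ge_of_tendsto hT (eventually_atTop.2 ⟨3, hnorm⟩)
    norm_num at this
  · obtain ⟨j, rfl⟩ := Nat.exists_eq_add_of_le' hk1
    exact uMax_perturbedFn_of_mem_bump (j := j) (by omega)
      ⟨by push_cast; linarith, by push_cast; linarith⟩
end
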